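/- Let u ≥ 1, v ≥ 1 and let A = (M^{2v} + M^{2v - 1} + ⋯ + M + 1)^{2^u} = (Σ_{i=0}^{2v} M^i)^{2^u} in F_2[x]. Then the length ℓ_A equals 2^u·(2^r - 2v - 1) + 1, where r is the least positive integer such that 2v < 2^r. -/

import Mathlib

open Polynomial Finset

/-- The polynomial `M = x^2 + x + 1` over `F_2`. -/
noncomputable def M : Polynomial (ZMod 2) := X ^ 2 + X + 1

/-- The odd part of a binary polynomial: `P` divided by `x^{val_x(P)} (x+1)^{val_{x+1}(P)}`. -/
noncomputable def oddPart (P : Polynomial (ZMod 2)) : Polynomial (ZMod 2) :=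
  P / (X ^ P.rootMultiplicity 0 * (X + 1) ^ P.rootMultiplicity 1)

/-- The Collatz sequence of a binary polynomial `A`:
`A_0 = A`, `A_{2k+1} = oddPart A_{2k}`, `A_{2k+2} = 1 + M * A_{2k+1}`. -/
noncomputable def collatz (A : Polynomial (ZMod 2)) : ℕ → Polynomial (ZMod 2)
  | 0 => A
  | n + 1 => if n % 2 = 0 then oddPart (collatz A n) else 1 + M * collatz A n

/-- `a_k`: the multiplicity of `x` in `A_k`. -/
noncomputable def aSeq (A : Polynomial (ZMod 2)) (k : ℕ) : ℕ :=
  (collatz A k).rootMultiplicity 0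

/-- `b_k`: the multiplicity of `x + 1` in `A_k`. -/
noncomputable def bSeq (A : Polynomial (ZMod 2)) (k : ℕ) : ℕ :=
  (collatz A k).rootMultiplicity 1

/-- The length `ℓ_A = m + 1`, where `m` is the least nonnegative integer
with `A_{2m+1} = 1`. -/
noncomputable def collatzLength (A : Polynomial (ZMod 2)) : ℕ :=
  sInf {m : ℕ | collatz A (2 * m + 1) = 1} + 1

-- basic facts
lemma eval_M_zero : eval 0 M = 1 := by simp [M]
lemma eval_M_one : eval 1 M = 1 := by simp [M]; decide
lemma one_add_M : 1 + M = X * (X + 1) := by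
  simp only [M]; ring_nf
  rw [show (2:Polynomial (ZMod 2)) = 0 from CharTwo.two_eq_zero]
  ring
lemma M_ne_zero : M ≠ 0 := fun h => by simpa [h] using eval_M_zero

lemma collatz_odd_step (A : Polynomial (ZMod 2)) (k : ℕ) :
    collatz A (2*k+1) = oddPart (collatz A (2*k)) := by
  rw [collatz]; simp
lemma collatz_even_step (A : Polynomial (ZMod 2)) (k : ℕ) :
    collatz A (2*k+2) = 1 + M * collatz A (2*k+1) := by
  rw [show 2*k+2 = (2*k+1)+1 by ring, collatz]
  simp [Nat.add_mod]

noncomputable def gs (w : ℕ) : Polynomial (ZMod 2) := ∑ i ∈ Finset.range w, M ^ i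

lemma one_add_M_mul_gs (w : ℕ) : (1 + M) * gs w = 1 + M ^ w := by
  have := mul_geom_sum M w
  have h2 : (M - 1 : Polynomial (ZMod 2)) = 1 + M := by
    rw [CharTwo.sub_eq_add]; ring
  rw [h2] at this
  rw [gs, this, CharTwo.sub_eq_add]; ring

lemma gs_succ (w : ℕ) : gs (w+1) = 1 + M * gs w := by
  rw [gs, gs, geom_sum_succ]; ring

lemma gs_one : gs 1 = 1 := by simp [gs]

lemma eval_gs_zero (w : ℕ) : eval 0 (gs w) = (w : ZMod 2) := by
  simp [gs, eval_finset_sum, eval_M_zero]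

lemma eval_gs_one (w : ℕ) : eval 1 (gs w) = (w : ZMod 2) := by
  simp [gs, eval_finset_sum, eval_M_one]

/-- odd polynomial predicate -/
def IsOddP (P : Polynomial (ZMod 2)) : Prop := eval 0 P = 1 ∧ eval 1 P = 1

lemma IsOddP.ne_zero {P} (h : IsOddP P) : P ≠ 0 := fun hz => by
  rw [hz] at h
  exact (by decide : (0:ZMod 2) ≠ 1) (by simpa using h.1)

lemma X_add_one_eq : (X + 1 : Polynomial (ZMod 2)) = X - C 1 := by
  rw [CharTwo.sub_eq_add, Polynomial.C_1]

lemma rootMult_zero {P : Polynomial (ZMod 2)} (h : eval 0 P = 1) : P.rootMultiplicity 0 = 0 :=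
  rootMultiplicity_eq_zero (by simp [IsRoot, h])

lemma rootMult_one {P : Polynomial (ZMod 2)} (h : eval 1 P = 1) : P.rootMultiplicity 1 = 0 :=
  rootMultiplicity_eq_zero (by simp [IsRoot, h])

lemma oddPart_of_isOddP {P : Polynomial (ZMod 2)} (h : IsOddP P) : oddPart P = P := by
  rw [oddPart, rootMult_zero h.1, rootMult_one h.2]
  simp only [pow_zero, one_mul]
  have h1 := mul_div_cancel_left₀ P (one_ne_zero : (1:Polynomial (ZMod 2)) ≠ 0)
  rwa [one_mul] at h1

lemma oddPart_shift {P : Polynomial (ZMod 2)} (h : IsOddP P) (a b : ℕ) :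
    oddPart (X ^ a * (X + 1) ^ b * P) = P := by
  have hX : (X : Polynomial (ZMod 2)) ≠ 0 := X_ne_zero
  have hX1 : (X + 1 : Polynomial (ZMod 2)) ≠ 0 := by
    intro hz
    have := congrArg (eval 0) hz
    simp at this
  have hne : (X:Polynomial (ZMod 2)) ^ a * (X + 1) ^ b * P ≠ 0 := by
    exact mul_ne_zero (mul_ne_zero (pow_ne_zero _ hX) (pow_ne_zero _ hX1)) h.ne_zero
  have hne2 : (X:Polynomial (ZMod 2)) ^ a * (X + 1) ^ b ≠ 0 :=
    mul_ne_zero (pow_ne_zero _ hX) (pow_ne_zero _ hX1)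
  have r0 : ((X:Polynomial (ZMod 2)) ^ a * (X + 1) ^ b * P).rootMultiplicity 0 = a := by
    rw [rootMultiplicity_mul hne, rootMultiplicity_mul hne2]
    rw [show ((X:Polynomial (ZMod 2)))^a = (X - C 0)^a by simp]
    rw [rootMultiplicity_X_sub_C_pow, rootMult_zero h.1,
      rootMult_zero (by simp : eval 0 ((X + 1:Polynomial (ZMod 2)) ^ b) = 1)]
    omega
  have r1 : ((X:Polynomial (ZMod 2)) ^ a * (X + 1) ^ b * P).rootMultiplicity 1 = b := by
    rw [rootMultiplicity_mul hne, rootMultiplicity_mul hne2]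
    rw [X_add_one_eq, rootMultiplicity_X_sub_C_pow, rootMult_one h.2,
      rootMult_one (by simp : eval 1 ((X:Polynomial (ZMod 2)) ^ a) = 1)]
    omega
  rw [oddPart, r0, r1, mul_div_cancel_left₀ _ hne2]

instance : CharP (Polynomial (ZMod 2)) 2 :=
  charP_of_injective_ringHom (Polynomial.C_injective) 2

lemma frob (p q : Polynomial (ZMod 2)) (e : ℕ) : (p + q) ^ 2 ^ e = p ^ 2 ^ e + q ^ 2 ^ e :=
  add_pow_char_pow ..

lemma one_add_M_ne_zero : (1 + M : Polynomial (ZMod 2)) ≠ 0 := by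
  rw [one_add_M]
  refine mul_ne_zero X_ne_zero fun hz => ?_
  have := congrArg (eval 0) hz
  simp at this

lemma gs_ne_zero {w : ℕ} (hw : Odd w) : gs w ≠ 0 := fun hz => by
  have h := congrArg (eval 0) hz
  rw [eval_gs_zero] at h
  rw [Nat.odd_iff] at hw
  rw [show ((w:ZMod 2)) = ((w % 2 : ℕ) : ZMod 2) from (ZMod.natCast_mod w 2).symm, hw] at h
  simpa using h

lemma eval_zero_one_add_M : eval 0 (1 + M : Polynomial (ZMod 2)) = 0 := by
  simp [eval_M_zero]; decide

lemma eval_one_one_add_M : eval 1 (1 + M : Polynomial (ZMod 2)) = 0 := by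
  simp [eval_M_one]; decide

/-- the stage state: `1 + M^j (1+M)^{E-j} (gs w)^E` -/
noncomputable def Q (E j w : ℕ) : Polynomial (ZMod 2) :=
  1 + M ^ j * (1 + M) ^ (E - j) * (gs w) ^ E

lemma Q_isOddP {E j w : ℕ} (hj : j < E) : IsOddP (Q E j w) := by
  constructor
  · rw [Q, show E - j = (E - j - 1) + 1 by omega, pow_succ]
    simp [eval_M_zero, eval_zero_one_add_M]
    exact Or.inl (Or.inr (by decide))
  · rw [Q, show E - j = (E - j - 1) + 1 by omega, pow_succ]
    simp [eval_M_one, eval_one_one_add_M]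
    exact Or.inl (Or.inr (by decide))

lemma Q_ne_one {E j w : ℕ} (hw : Odd w) : Q E j w ≠ 1 := by
  rw [Q]
  intro h
  have h2 : (1:Polynomial (ZMod 2)) + M ^ j * (1 + M) ^ (E - j) * (gs w) ^ E = 1 + 0 := by
    rw [h, add_zero]
  exact (mul_ne_zero (mul_ne_zero (pow_ne_zero _ M_ne_zero)
    (pow_ne_zero _ one_add_M_ne_zero)) (pow_ne_zero _ (gs_ne_zero hw))) (add_left_cancel h2)

lemma Q_step {E j w : ℕ} (hj : j < E) :
    1 + M * Q E j w = (X * (X + 1)) * Q E (j + 1) w := by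
  rw [← one_add_M, Q, Q]
  have h1 : (1 + M : Polynomial (ZMod 2)) ^ (E - j) = (1 + M) * (1 + M) ^ (E - (j+1)) := by
    rw [← pow_succ']
    congr 1
    omega
  rw [h1]; ring

lemma one_add_Mpow (f w : ℕ) : (1 + M ^ w) ^ 2 ^ f = 1 + M ^ (2 ^ f * w) := by
  rw [frob, one_pow, ← pow_mul, mul_comm]

lemma one_add_M_pow (t : ℕ) : (1 + M : Polynomial (ZMod 2)) ^ 2 ^ t = 1 + M ^ 2 ^ t := by
  have := one_add_Mpow t 1
  simpa using this

lemma Q_top (e w : ℕ) : Q (2^e) (2^e) w = (gs (w + 1)) ^ 2 ^ e := by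
  rw [Q, Nat.sub_self, pow_zero, mul_one, gs_succ, frob, one_pow, mul_pow]

lemma gs_split (f w : ℕ) : gs (2 ^ f * w) = (1 + M) ^ (2 ^ f - 1) * (gs w) ^ 2 ^ f := by
  apply mul_left_cancel₀ one_add_M_ne_zero
  rw [one_add_M_mul_gs, ← mul_assoc, ← pow_succ',
    show 2 ^ f - 1 + 1 = 2 ^ f from by have := Nat.one_le_two_pow (n := f); omega,
    ← mul_pow, one_add_M_mul_gs, one_add_Mpow]

lemma stage_start {n t e w : ℕ} (hE : n * 2 ^ t = 2 ^ e * w) (hce : 2 ^ t ≤ 2 ^ e) :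
    (gs (n + 1)) ^ 2 ^ t = Q (2 ^ e) (2 ^ t) w := by
  apply mul_left_cancel₀ (pow_ne_zero (2^t) one_add_M_ne_zero)
  have lhs : (1+M) ^ 2^t * (gs (n+1)) ^ 2^t = 1 + M ^ (2^t * (n+1)) := by
    rw [← mul_pow, one_add_M_mul_gs, one_add_Mpow]
  have hE2 : ((1+M:Polynomial (ZMod 2))) ^ 2^t * (1+M) ^ (2^e - 2^t) = (1+M) ^ 2^e := by
    rw [← pow_add]; congr 1; omega
  have harith : 2^t + 2^e * w = 2^t * (n+1) := by
    rw [Nat.mul_succ, mul_comm (2^t) n, hE]; omega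
  have rhs : (1+M) ^ 2^t * Q (2^e) (2^t) w = 1 + M ^ (2^t * (n+1)) := by
    calc (1+M) ^ 2^t * Q (2^e) (2^t) w
        = (1+M) ^ 2^t + ((1+M) ^ 2^t * (1+M) ^ (2^e - 2^t)) * (M ^ 2^t * (gs w) ^ 2^e) := by
          rw [Q]; ring
      _ = (1 + M ^ 2^t) + M ^ 2^t * ((1+M) * gs w) ^ 2^e := by
          rw [hE2, mul_pow, one_add_M_pow]; ring
      _ = 1 + M ^ 2^t + M ^ 2^t * (1 + M ^ (2^e * w)) := by
          rw [one_add_M_mul_gs, one_add_Mpow]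
      _ = 1 + (M ^ 2^t + M ^ 2^t) + M ^ (2^t + 2^e * w) := by
          rw [pow_add]; ring
      _ = 1 + M ^ (2^t * (n+1)) := by
          rw [CharTwo.add_self_eq_zero, add_zero, harith]
  rw [lhs, rhs]

lemma odd_cast_one {w : ℕ} (hw : Odd w) : (w : ZMod 2) = 1 := by
  rw [Nat.odd_iff] at hw
  rw [show ((w:ZMod 2)) = ((w % 2 : ℕ) : ZMod 2) from (ZMod.natCast_mod w 2).symm, hw, Nat.cast_one]

lemma gs_pow_isOddP {w : ℕ} (hw : Odd w) (N : ℕ) : IsOddP ((gs w) ^ N) := by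
  constructor
  · rw [eval_pow, eval_gs_zero, odd_cast_one hw, one_pow]
  · rw [eval_pow, eval_gs_one, odd_cast_one hw, one_pow]

lemma collatz_next {A B B' : Polynomial (ZMod 2)} {k a b : ℕ}
    (hB : collatz A (2*k+1) = B) (hfac : 1 + M * B = X^a*(X+1)^b*B') (hodd : IsOddP B') :
    collatz A (2*(k+1)+1) = B' := by
  have h2 : collatz A (2*k+2) = X^a*(X+1)^b*B' := by
    rw [collatz_even_step, hB, hfac]
  rw [show 2*(k+1) = 2*k+2 by ring] at *
  rw [show 2*k+2+1 = 2*(k+1)+1 by ring, collatz_odd_step,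
    show 2*(k+1) = 2*k+2 by ring, h2, oddPart_shift hodd]

lemma stage_steps {A : Polynomial (ZMod 2)} {k e w c : ℕ} (hw : Odd w)
    (hstart : collatz A (2*k+1) = Q (2^e) c w) :
    ∀ d, c + d < 2^e → collatz A (2*(k+d)+1) = Q (2^e) (c+d) w := by
  intro d
  induction d with
  | zero => intro _; simpa using hstart
  | succ d ih =>
    intro hd
    have hprev := ih (by omega)
    have hfac := Q_step (E := 2^e) (j := c + d) (w := w) (by omega)
    rw [show (X:Polynomial (ZMod 2))*(X+1) = X^1*(X+1)^1 by ring] at hfac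
    have := collatz_next hprev hfac (Q_isOddP (by omega))
    rw [show k + (d+1) = k + d + 1 by ring, show c + (d+1) = c + d + 1 by ring]
    exact this

/-- transition at end of stage -/
lemma stage_end {A : Polynomial (ZMod 2)} {k e w f w'' : ℕ} (hw : Odd w) (hw'' : Odd w'')
    (hsplit : w + 1 = 2^f * w'')
    (hlast : collatz A (2*k+1) = Q (2^e) (2^e - 1) w) :
    collatz A (2*(k+1)+1) = (gs w'') ^ 2^(e+f) := by
  have h1 : (0:ℕ) < 2^e := Nat.pow_pos (by norm_num)
  have hfac : 1 + M * Q (2^e) (2^e - 1) w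
      = X^((2^f-1)*2^e+1)*(X+1)^((2^f-1)*2^e+1)*((gs w'') ^ 2^(e+f)) := by
    have hstep := Q_step (E := 2^e) (j := 2^e - 1) (w := w) (by omega)
    rw [show 2^e - 1 + 1 = 2^e by omega, Q_top] at hstep
    rw [hstep, hsplit, gs_split, mul_pow, ← pow_mul, ← pow_mul]
    rw [show 2^f * 2^e = 2^(e+f) by rw [← pow_add]; ring]
    rw [one_add_M, mul_pow X (X+1)]
    ring
  exact collatz_next hlast hfac (gs_pow_isOddP hw'' _)

lemma odd_of_not_two_dvd {m : ℕ} (h : ¬ 2 ∣ m) : Odd m := by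
  rcases Nat.even_or_odd m with he | ho
  · exact absurd he.two_dvd h
  · exact ho

lemma main_lemma : ∀ W : ℕ, ∀ (A : Polynomial (ZMod 2)) (k n t D : ℕ),
    0 < n → Even n → 1 ≤ t → W = n * 2^t →
    collatz A (2*k+1) = (gs (n+1)) ^ 2^t →
    W + 2^t + D = 2^(Nat.log 2 W + 1) →
    collatz A (2*(k+D)+1) = 1 ∧ ∀ i < D, collatz A (2*(k+i)+1) ≠ 1 := by
  intro W
  induction W using Nat.strong_induction_on with
  | _ W IH =>
  intro A k n t D hn hneven ht hW hstate hD
  have h2t : (0:ℕ) < 2^t := Nat.pow_pos (by norm_num)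
  have hW0 : W ≠ 0 := by
    rw [hW]; exact Nat.mul_ne_zero (by omega) (by omega)
  set e := W.factorization 2 with he
  set w := W / 2^e with hwdef
  have hprod : 2^e * w = W := Nat.ordProj_mul_ordCompl_eq_self W 2
  have hwodd : Odd w := odd_of_not_two_dvd (Nat.not_dvd_ordCompl Nat.prime_two hW0)
  have hwpos : 1 ≤ w := hwodd.pos
  have hte : t + 1 ≤ e := by
    apply (Nat.Prime.pow_dvd_iff_le_factorization Nat.prime_two hW0).mp
    obtain ⟨n', hn'⟩ := hneven
    exact ⟨n', by rw [hW, hn', pow_succ]; ring⟩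
  have hE1 : 2^t < 2^e := Nat.pow_lt_pow_right one_lt_two (by omega)
  have hq0 : collatz A (2*k+1) = Q (2^e) (2^t) w := by
    rw [hstate]
    exact stage_start (by rw [hW] at hprod; omega) (le_of_lt hE1)
  have hsteps := stage_steps hwodd hq0
  have hlast : collatz A (2*(k + (2^e - 1 - 2^t))+1) = Q (2^e) (2^e - 1) w := by
    have h := hsteps (2^e - 1 - 2^t) (by omega)
    rw [show 2^t + (2^e - 1 - 2^t) = 2^e - 1 by omega] at h
    exact h
  set f := (w+1).factorization 2 with hf
  set w'' := (w+1)/2^f with hw''def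
  have hsplit : 2^f * w'' = w + 1 := Nat.ordProj_mul_ordCompl_eq_self (w+1) 2
  have hw''odd : Odd w'' := odd_of_not_two_dvd (Nat.not_dvd_ordCompl Nat.prime_two (by omega))
  have hw''pos : 1 ≤ w'' := hw''odd.pos
  have hf1 : 1 ≤ f := by
    apply (Nat.Prime.pow_dvd_iff_le_factorization Nat.prime_two (show w+1 ≠ 0 by omega)).mp
    rw [pow_one]
    rcases hwodd with ⟨j, hj⟩
    exact ⟨j+1, by omega⟩
  have htrans := stage_end hwodd hw''odd hsplit.symm hlast
  rw [show (k + (2^e - 1 - 2^t)) + 1 = k + (2^e - 2^t) by omega] at htrans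
  by_cases hterm : w'' = 1
  · -- terminal stage
    rw [hterm, gs_one, one_pow] at htrans
    rw [hterm, Nat.mul_one] at hsplit
    have hwf : w + 1 = 2^f := hsplit.symm
    have hlog : Nat.log 2 W = e + (f-1) := by
      apply Nat.log_eq_of_pow_le_of_lt_pow
      · calc 2^(e+(f-1)) = 2^e * 2^(f-1) := by rw [pow_add]
          _ ≤ 2^e * w := by
              have : 2^(f-1) ≤ w := by
                have h1 : 2^(f-1) * 2 = 2^f := by rw [← pow_succ]; congr 1; omega
                omega
              exact Nat.mul_le_mul_left _ this
          _ = W := hprod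
      · calc W = 2^e * w := hprod.symm
          _ < 2^e * 2^f := by
              have h0 : (0:ℕ) < 2^e := by positivity
              exact (mul_lt_mul_iff_right₀ h0).mpr (by omega)
          _ = 2^(e+(f-1)+1) := by rw [← pow_add]; congr 1; omega
    have hDval : D = 2^e - 2^t := by
      rw [hlog] at hD
      have h1 : 2^(e + (f-1) + 1) = 2^e * 2^f := by rw [← pow_add]; congr 1; omega
      have h2 : 2^e * 2^f = W + 2^e := by
        rw [← hwf, Nat.mul_add, hprod, Nat.mul_one]
      omega
    constructor
    · rw [hDval]; exact htrans
    · intro i hi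
      have hstep := hsteps i (by omega)
      rw [hstep]
      exact Q_ne_one hwodd
  · -- recursive case
    have hw''3 : 3 ≤ w'' := by
      rcases hw''odd with ⟨j, hj⟩
      omega
    have hwne1 : w ≠ 1 := by
      intro h1
      rw [h1] at hsplit
      have h2 : w'' ∣ 2 := ⟨2^f, by rw [mul_comm]; omega⟩
      rcases (Nat.dvd_prime Nat.prime_two).mp h2 with h3 | h3
      · exact hterm h3
      · rcases hw''odd with ⟨j, hj⟩; omega
    have hw3 : 3 ≤ w := by
      rcases hwodd with ⟨j, hj⟩
      omega
    set g := Nat.log 2 w with hg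
    have hglb : 2^g ≤ w := Nat.pow_log_le_self 2 (by omega)
    have hgub : w < 2^(g+1) := Nat.lt_pow_succ_log_self (by norm_num) w
    have hg1 : 1 ≤ g := by
      have := (Nat.le_log_iff_pow_le (by norm_num) (show w ≠ 0 by omega)).mpr (show 2^1 ≤ w by omega)
      omega
    have hfg : f < g := by
      by_contra hc
      push_neg at hc
      have h1 : 2^g ≤ 2^f := Nat.pow_le_pow_right (by norm_num) hc
      have h2 : 2^f * 3 ≤ 2^f * w'' := Nat.mul_le_mul_left _ hw''3
      have h3 : w + 1 ≤ 2 * 2^g := by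
        rw [show 2 * 2^g = 2^(g+1) by rw [pow_succ]; ring]
        omega
      omega
    have hkey : 2^g ≤ w + 1 - 2^f := by
      have hdvd1 : 2^f ∣ w + 1 := ⟨w'', hsplit.symm⟩
      have hdvd2 : (2:ℕ)^f ∣ 2^g := pow_dvd_pow 2 (le_of_lt hfg)
      have hdvd3 : 2^f ∣ (w + 1 - 2^g) := Nat.dvd_sub hdvd1 hdvd2
      have hpos : 0 < w + 1 - 2^g := by omega
      have := Nat.le_of_dvd hpos hdvd3
      omega
    -- new stage parameters
    set W' := (w'' - 1) * 2^(e+f) with hW'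
    have hW'alt : W' = 2^e * (w + 1 - 2^f) := by
      rw [hW', pow_add, Nat.mul_sub]
      rw [Nat.sub_mul, one_mul]
      congr 1
      rw [← hsplit]; ring
    have hWval : W = 2^e * w := hprod.symm
    have hlogW : Nat.log 2 W = e + g := by
      apply Nat.log_eq_of_pow_le_of_lt_pow
      · calc 2^(e+g) = 2^e * 2^g := by rw [pow_add]
          _ ≤ 2^e * w := Nat.mul_le_mul_left _ hglb
          _ = W := hprod
      · calc W = 2^e * w := hprod.symm
          _ < 2^e * 2^(g+1) := by
              have h0 : (0:ℕ) < 2^e := by positivity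
              exact (mul_lt_mul_iff_right₀ h0).mpr hgub
          _ = 2^(e+g+1) := by rw [← pow_add]; congr 1
    have hlogW' : Nat.log 2 W' = e + g := by
      apply Nat.log_eq_of_pow_le_of_lt_pow
      · calc 2^(e+g) = 2^e * 2^g := by rw [pow_add]
          _ ≤ 2^e * (w + 1 - 2^f) := Nat.mul_le_mul_left _ hkey
          _ = W' := hW'alt.symm
      · calc W' = 2^e * (w + 1 - 2^f) := hW'alt
          _ ≤ 2^e * w := Nat.mul_le_mul_left _ (by
              have h2 : 1 ≤ 2^f := Nat.one_le_two_pow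
              omega)
          _ < 2^e * 2^(g+1) := by
              have h0 : (0:ℕ) < 2^e := by positivity
              exact (mul_lt_mul_iff_right₀ h0).mpr hgub
          _ = 2^(e+g+1) := by rw [← pow_add]; congr 1
    have hW'lt : W' < W := by
      have h2 : 2^f ≥ 2 := by
        calc (2:ℕ) = 2^1 := (pow_one 2).symm
          _ ≤ 2^f := Nat.pow_le_pow_right (by norm_num) hf1
      have h3 : 2^e * (w + 1 - 2^f) < 2^e * w := by
        have h0 : (0:ℕ) < 2^e := by positivity
        exact (mul_lt_mul_iff_right₀ h0).mpr (by omega)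
      omega
    -- linear bookkeeping for D'
    have hsum : W' + 2^(e+f) = W + 2^e := by
      rw [hW'alt, hWval, pow_add]
      have h2 : 2^f ≤ w + 1 := Nat.le_of_dvd (by omega) ⟨w'', hsplit.symm⟩
      rw [Nat.mul_sub]
      rw [Nat.mul_add, Nat.mul_one]
      have h3 : 2^e * 2^f ≤ 2^e * w + 2^e := by
        have h4 := Nat.mul_le_mul_left (2^e) h2
        rw [Nat.mul_add, Nat.mul_one] at h4
        exact h4
      omega
    have hle : W + 2^e ≤ 2^(Nat.log 2 W + 1) := by
      rw [hlogW, hWval]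
      calc 2^e * w + 2^e = 2^e * (w+1) := by ring
        _ ≤ 2^e * 2^(g+1) := Nat.mul_le_mul_left _ (by omega)
        _ = 2^(e+g+1) := by rw [← pow_add]; congr 1
    have hKeq : (2:ℕ)^(Nat.log 2 W' + 1) = 2^(Nat.log 2 W + 1) := by rw [hlogW', hlogW]
    have hD' : W' + 2^(e+f) + (D - (2^e - 2^t)) = 2^(Nat.log 2 W' + 1) := by
      rw [hKeq]; omega
    have hDbig : 2^e - 2^t ≤ D := by omega
    have hstate' : collatz A (2*(k + (2^e - 2^t))+1) = (gs ((w''-1)+1)) ^ 2^(e+f) := by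
      rw [show w''-1+1 = w'' by omega]
      exact htrans
    obtain ⟨hfin, hnot⟩ := IH W' hW'lt A (k + (2^e - 2^t)) (w''-1) (e+f) (D - (2^e - 2^t))
      (by omega)
      (by rcases hw''odd with ⟨j, hj⟩; exact ⟨j, by omega⟩)
      (by omega) rfl hstate' hD'
    constructor
    · rw [show k + D = (k + (2^e - 2^t)) + (D - (2^e - 2^t)) by omega]
      exact hfin
    · intro i hi
      by_cases hcase : i < 2^e - 2^t
      · have hstep := hsteps i (by omega)
        rw [hstep]
        exact Q_ne_one hwodd
      · have h := hnot (i - (2^e - 2^t)) (by omega)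
        rw [show k + i = (k + (2^e - 2^t)) + (i - (2^e - 2^t)) by omega]
        exact h

theorem length_geom_sum_even_powered (u v r : ℕ) (hu : 1 ≤ u) (hv : 1 ≤ v)
    (hr : IsLeast {s : ℕ | 0 < s ∧ 2 * v < 2 ^ s} r)
    (A : Polynomial (ZMod 2))
    (hA : A = (∑ i ∈ Finset.range (2 * v + 1), M ^ i) ^ 2 ^ u) :
    collatzLength A = 2 ^ u * (2 ^ r - 2 * v - 1) + 1 := by
  obtain ⟨⟨hr0, hrv⟩, hrmin⟩ := hr
  have hAgs : A = (gs (2*v+1)) ^ 2^u := by rw [hA, gs]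
  have hodd : Odd (2*v+1) := ⟨v, by ring⟩
  have hstate : collatz A (2*0+1) = (gs (2*v+1-1+1)) ^ 2^u := by
    rw [show 2*0+1 = 2*0+1 from rfl, collatz_odd_step]
    rw [show collatz A (2*0) = A from rfl, hAgs,
      oddPart_of_isOddP (gs_pow_isOddP hodd _)]
    congr 2
  set W := 2*v*2^u with hWdef
  have hlow : 2^(r-1) ≤ 2*v := by
    rcases Nat.eq_or_lt_of_le hr0 with h1 | h1
    · rw [← h1]; simp; omega
    · by_contra hc
      push_neg at hc
      have := hrmin (show r-1 ∈ {s : ℕ | 0 < s ∧ 2*v < 2^s} from ⟨by omega, hc⟩)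
      omega
  have hlog : Nat.log 2 W = u + r - 1 := by
    have h1 : 2^(u + r - 1) ≤ W := by
      calc 2^(u+r-1) = 2^(r-1) * 2^u := by rw [← pow_add]; congr 1; omega
        _ ≤ (2*v) * 2^u := Nat.mul_le_mul_right _ hlow
    have h2 : W < 2^(u+r-1+1) := by
      calc W = 2*v*2^u := rfl
        _ < 2^r * 2^u := (Nat.mul_lt_mul_right (by positivity)).mpr hrv
        _ = 2^(u+r-1+1) := by rw [← pow_add]; congr 1; omega
    exact Nat.log_eq_of_pow_le_of_lt_pow h1 h2
  set D := 2^u * (2^r - 2*v - 1) with hDdef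
  have hDeq : W + 2^u + D = 2^(Nat.log 2 W + 1) := by
    rw [hlog, show u + r - 1 + 1 = u + r by omega]
    have h1 : 2^u * (2^r - (2*v+1)) = 2^u * 2^r - 2^u * (2*v+1) := Nat.mul_sub ..
    have h2 : 2^u * (2*v+1) = 2*v*2^u + 2^u := by ring
    have h3 : 2^u * (2*v+1) ≤ 2^u * 2^r := Nat.mul_le_mul_left _ (by omega)
    have h4 : (2:ℕ)^u * 2^r = 2^(u+r) := by rw [← pow_add]
    have h5 : 2^r - 2*v - 1 = 2^r - (2*v+1) := by omega
    rw [hDdef, h5]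
    omega
  obtain ⟨hfin, hnot⟩ := main_lemma W A 0 (2*v) u D (by omega) ⟨v, by ring⟩ hu rfl hstate hDeq
  have hinf : sInf {m : ℕ | collatz A (2 * m + 1) = 1} = D := by
    have hmem : D ∈ {m : ℕ | collatz A (2 * m + 1) = 1} := by
      simpa using hfin
    have h2 := Nat.sInf_le hmem
    have h1 := Nat.sInf_mem (⟨D, hmem⟩ : Set.Nonempty _)
    by_contra hne2
    have hlt : sInf {m : ℕ | collatz A (2 * m + 1) = 1} < D := lt_of_le_of_ne h2 hne2
    have := hnot _ hlt
    simp only [Set.mem_setOf_eq] at h1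
    rw [zero_add] at this
    exact this h1
  rw [collatzLength, hinf]
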